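/- (Constraint violations.) Let x* ∈ X be an optimal solution of min{ f(x) : g_k(x) ≤ 0 ∀k, x ∈ X }, let λ* ≥ 0 (componentwise) satisfy inf_{x ∈ X}( f(x) + Σ_k λ*_k g_k(x) ) = f(x*), and set D = β² + L_f + 2‖λ*‖‖L_g‖ + 2C‖L_g‖. If the step size γ > 0 satisfies D + ‖L_g‖·R/√γ − 1/γ ≤ 0, then for every t ≥ 1 and every k ∈ {1,…,m}, the running average x̄(t) = (1/t) Σ_{τ=0}^{t−1} x(τ) satisfies g_k(x̄(t)) ≤ (1/t)(2‖λ*‖ + R/√γ + C). -/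

import Mathlib

/-!
The virtual queue `Q` accumulates the constraint values, so `∑_{τ<t} g_k(x(τ)) ≤ Q_k(t)`, and by
Jensen the average `x̄(t)` violates `g_k` by at most `‖Q(t)‖ / t`. It remains to bound the queue.
Each iterate is a projected gradient step for the Lagrangian `f + ∑_k w_k g_k` with weights
`w = Q(t) + g(x(t−1)) ≥ 0`; its three-point inequality, combined with the queue drift, the
duality bound `f(x*) ≤ f + ⟪λ*, g⟫` and the `β`-Lipschitz continuity of `g`, shows that the
potential `γ‖Q‖² - 2γ⟪λ*, Q⟫ + ‖x* - x‖² - γ‖g(x)‖²` does not increase as long as the step-size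
condition absorbs the curvature `Lf + β² + ⟪w, L_g⟫`, which holds whenever
`‖Q‖ ≤ 2‖λ*‖ + R/√γ + C`. The potential starts below `R²`, and a potential below `R²` forces
exactly that bound on `‖Q‖`, so by induction `‖Q(t)‖ ≤ 2‖λ*‖ + R/√γ + C` for all `t`.
-/

/-- The stacked constraint vector `g(x) = (g_1(x), …, g_m(x))` as an element of
Euclidean space `ℝ^m`. -/
noncomputable def gvec {n m : ℕ} (g : Fin m → EuclideanSpace ℝ (Fin n) → ℝ)
    (x : EuclideanSpace ℝ (Fin n)) : EuclideanSpace ℝ (Fin m) :=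
  WithLp.toLp 2 (fun k => g k x)

open scoped RealInnerProductSpace
open AffineMap Set

section ConvexAnalysis

variable {E : Type*} [NormedAddCommGroup E] [InnerProductSpace ℝ E]

theorem Convex.norm_sub_sq_add_norm_sub_sq_le {X : Set E} {p y u : E} (hX : Convex ℝ X)
    (hy : y ∈ X) (hmin : ∀ w ∈ X, ‖y - p‖ ≤ ‖w - p‖) (hu : u ∈ X) :
    ‖y - p‖ ^ 2 + ‖u - y‖ ^ 2 ≤ ‖u - p‖ ^ 2 := by
  have : Nonempty X := ⟨⟨y, hy⟩⟩
  have hinf : ‖p - y‖ = ⨅ w : X, ‖p - w‖ :=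
    le_antisymm (le_ciInf fun w => by simpa only [norm_sub_rev p] using hmin w w.2)
      (ciInf_le ⟨0, by rintro _ ⟨w, rfl⟩; positivity⟩ (⟨y, hy⟩ : X))
  have hobtuse := (norm_eq_iInf_iff_real_inner_le_zero hX hy).1 hinf u hu
  have hsplit : u - p = (u - y) + (y - p) := by abel
  rw [hsplit, norm_add_sq_real, ← neg_sub p y, inner_neg_right, real_inner_comm]
  linarith

theorem Convex.projected_gradient_step_le {X : Set E} {φ : E → ℝ} {d z y u : E} {γ L : ℝ}
    (hX : Convex ℝ X) (hy : y ∈ X) (hproj : ∀ w ∈ X, ‖y - (z - γ • d)‖ ≤ ‖w - (z - γ • d)‖)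
    (hu : u ∈ X) (hγ : 0 ≤ γ) (hdesc : φ y ≤ φ z + ⟪d, y - z⟫ + L / 2 * ‖y - z‖ ^ 2)
    (hsub : φ z + ⟪d, u - z⟫ ≤ φ u) :
    2 * γ * (φ y - φ u) ≤ ‖u - z‖ ^ 2 - ‖u - y‖ ^ 2 - (1 - γ * L) * ‖y - z‖ ^ 2 := by
  have hpush := hX.norm_sub_sq_add_norm_sub_sq_le hy hproj hu
  have hexpand : ∀ w : E,
      ‖w - (z - γ • d)‖ ^ 2 = ‖w - z‖ ^ 2 + 2 * γ * ⟪d, w - z⟫ + γ ^ 2 * ‖d‖ ^ 2 := by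
    intro w
    rw [show w - (z - γ • d) = (w - z) + γ • d by abel, norm_add_sq_real, real_inner_smul_right,
      norm_smul, mul_pow, Real.norm_eq_abs, sq_abs, real_inner_comm]
    ring
  rw [hexpand, hexpand] at hpush
  nlinarith [mul_le_mul_of_nonneg_left hdesc hγ, mul_le_mul_of_nonneg_left hsub hγ]

variable [CompleteSpace E]

theorem HasGradientAt.hasDerivAt_comp_lineMap {f : E → ℝ} {f' a b : E} {t : ℝ}
    (hf : HasGradientAt f f' (lineMap a b t)) :
    HasDerivAt (f ∘ lineMap a b) ⟪f', b - a⟫ t := by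
  simpa using (hasGradientAt_iff_hasFDerivAt.1 hf).comp_hasDerivAt t hasDerivAt_lineMap

theorem ConvexOn.add_inner_le_of_hasGradientAt {X : Set E} {f : E → ℝ} {f' a b : E}
    (hf : ConvexOn ℝ X f) (hf' : HasGradientAt f f' a) (ha : a ∈ X) (hb : b ∈ X) :
    f a + ⟪f', b - a⟫ ≤ f b := by
  have hslope := (hf.comp_affineMap (lineMap a b)).le_slope_of_hasDerivAt
    (x := 0) (y := 1) (by simpa) (by simpa) one_pos
    (HasGradientAt.hasDerivAt_comp_lineMap (by simpa))
  simp only [slope_def_field, Function.comp_apply, lineMap_apply_zero, lineMap_apply_one,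
    sub_zero, div_one] at hslope
  linarith

theorem le_add_inner_add_of_lipschitz_gradient {X : Set E} {f : E → ℝ} {f' : E → E} {L : ℝ}
    {a b : E} (hX : Convex ℝ X) (hf : ∀ z ∈ X, HasGradientAt f (f' z) z)
    (hL : ∀ z ∈ X, ∀ w ∈ X, ‖f' z - f' w‖ ≤ L * ‖z - w‖) (ha : a ∈ X) (hb : b ∈ X) :
    f b ≤ f a + ⟪f' a, b - a⟫ + L / 2 * ‖b - a‖ ^ 2 := by
  set v := b - a
  have hmem : ∀ t ∈ Icc (0 : ℝ) 1, lineMap a b t ∈ X := fun t ht => hX.lineMap_mem ha hb ht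
  set ψ : ℝ → ℝ := fun t => f (lineMap a b t) - t * ⟪f' a, v⟫ - L / 2 * t ^ 2 * ‖v‖ ^ 2
  have hψ : ∀ t ∈ Icc (0 : ℝ) 1,
      HasDerivAt ψ (⟪f' (lineMap a b t) - f' a, v⟫ - L * t * ‖v‖ ^ 2) t := by
    intro t ht
    refine (((hf _ (hmem t ht)).hasDerivAt_comp_lineMap.sub
      ((hasDerivAt_id t).mul_const ⟪f' a, v⟫)).sub
      (((hasDerivAt_pow 2 t).const_mul (L / 2)).mul_const (‖v‖ ^ 2))).congr_deriv ?_
    rw [inner_sub_left]; norm_num; ring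
  have hψ_nonpos : ∀ t ∈ Icc (0 : ℝ) 1, ⟪f' (lineMap a b t) - f' a, v⟫ - L * t * ‖v‖ ^ 2 ≤ 0 := by
    intro t ht
    have hdist : ‖lineMap a b t - a‖ = t * ‖v‖ := by
      rw [lineMap_apply_module', add_sub_cancel_right, norm_smul, Real.norm_of_nonneg ht.1]
    calc ⟪f' (lineMap a b t) - f' a, v⟫ - L * t * ‖v‖ ^ 2
        ≤ ‖f' (lineMap a b t) - f' a‖ * ‖v‖ - L * t * ‖v‖ ^ 2 := by
          gcongr; exact real_inner_le_norm _ _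
      _ ≤ L * ‖lineMap a b t - a‖ * ‖v‖ - L * t * ‖v‖ ^ 2 := by
          gcongr; exact hL _ (hmem t ht) _ ha
      _ = 0 := by rw [hdist]; ring
  have hanti : AntitoneOn ψ (Icc 0 1) := by
    refine antitoneOn_of_hasDerivWithinAt_nonpos (convex_Icc 0 1)
      (fun t ht => (hψ t ht).continuousAt.continuousWithinAt)
      (fun t ht => (hψ t (interior_subset ht)).hasDerivWithinAt)
      (fun t ht => hψ_nonpos t (interior_subset ht))
  have := hanti (left_mem_Icc.2 zero_le_one) (right_mem_Icc.2 zero_le_one) zero_le_one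
  simp only [ψ, lineMap_apply_zero, lineMap_apply_one] at this
  linarith

end ConvexAnalysis

section Lagrangian

variable {E ι : Type*} [NormedAddCommGroup E] [InnerProductSpace ℝ E] [CompleteSpace E]
  [Fintype ι]

theorem Convex.projected_gradient_step_le_lagrangian {X : Set E} {f : E → ℝ} {Gf : E → E}
    {g : ι → E → ℝ} {Gg : ι → E → E} {Lf γ : ℝ} {Lg w : ι → ℝ} {z y u : E}
    (hX : Convex ℝ X) (hf : ConvexOn ℝ X f) (hfd : ∀ p, HasGradientAt f (Gf p) p)
    (hGf : ∀ p ∈ X, ∀ q ∈ X, ‖Gf p - Gf q‖ ≤ Lf * ‖p - q‖)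
    (hg : ∀ k, ConvexOn ℝ X (g k)) (hgd : ∀ k p, HasGradientAt (g k) (Gg k p) p)
    (hGg : ∀ k, ∀ p ∈ X, ∀ q ∈ X, ‖Gg k p - Gg k q‖ ≤ Lg k * ‖p - q‖)
    (hw : ∀ k, 0 ≤ w k) (hγ : 0 ≤ γ) (hz : z ∈ X) (hy : y ∈ X) (hu : u ∈ X)
    (hproj : ∀ p ∈ X, ‖y - (z - γ • (Gf z + ∑ k, w k • Gg k z))‖ ≤
      ‖p - (z - γ • (Gf z + ∑ k, w k • Gg k z))‖) :
    2 * γ * (f y + ∑ k, w k * g k y - (f u + ∑ k, w k * g k u)) ≤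
      ‖u - z‖ ^ 2 - ‖u - y‖ ^ 2 - (1 - γ * (Lf + ∑ k, w k * Lg k)) * ‖y - z‖ ^ 2 := by
  have hinner : ∀ v, ⟪Gf z + ∑ k, w k • Gg k z, v⟫ = ⟪Gf z, v⟫ + ∑ k, w k * ⟪Gg k z, v⟫ := by
    intro v
    simp only [inner_add_left, sum_inner, real_inner_smul_left]
  refine hX.projected_gradient_step_le (φ := fun p => f p + ∑ k, w k * g k p) hy hproj hu hγ ?_ ?_
  · have hdesc k := mul_le_mul_of_nonneg_left
      (le_add_inner_add_of_lipschitz_gradient hX (fun p _ => hgd k p) (hGg k) hz hy) (hw k)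
    have := Finset.sum_le_sum fun k (_ : k ∈ Finset.univ) => hdesc k
    have hf := le_add_inner_add_of_lipschitz_gradient hX (fun p _ => hfd p) hGf hz hy
    simp only [mul_add, Finset.sum_add_distrib] at this
    have hcurv : ∑ k, w k * (Lg k / 2 * ‖y - z‖ ^ 2) = (∑ k, w k * Lg k) / 2 * ‖y - z‖ ^ 2 := by
      rw [Finset.sum_div, Finset.sum_mul]
      exact Finset.sum_congr rfl fun k _ => by ring
    rw [hinner]
    linarith
  · have hsub k := mul_le_mul_of_nonneg_left
      ((hg k).add_inner_le_of_hasGradientAt (hgd k z) hz hu) (hw k)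
    have := Finset.sum_le_sum fun k (_ : k ∈ Finset.univ) => hsub k
    have hf := hf.add_inner_le_of_hasGradientAt (hfd z) hz hu
    simp only [mul_add, Finset.sum_add_distrib] at this
    rw [hinner]
    linarith

end Lagrangian

theorem ConvexOn.map_range_average_le {E : Type*} [AddCommGroup E] [Module ℝ E] {X : Set E}
    {φ : E → ℝ} (hφ : ConvexOn ℝ X φ) {x : ℕ → E} {t : ℕ} (ht : 0 < t)
    (hx : ∀ τ < t, x τ ∈ X) :
    φ ((t : ℝ)⁻¹ • ∑ τ ∈ Finset.range t, x τ) ≤ (t : ℝ)⁻¹ * ∑ τ ∈ Finset.range t, φ (x τ) := by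
  simpa [Finset.centerMass] using hφ.map_centerMass_le (t := Finset.range t) (w := fun _ => 1)
    (fun _ _ => zero_le_one) (by simpa using ht) (fun τ hτ => hx τ (Finset.mem_range.1 hτ))

theorem EuclideanSpace.real_inner_eq_sum {ι : Type*} [Fintype ι] (u v : EuclideanSpace ℝ ι) :
    ⟪u, v⟫ = ∑ k, u k * v k := by
  simp [PiLp.inner_apply, mul_comm]

section VirtualQueue

variable {ι : Type*}

structure IsVirtualQueue (b Q : ℕ → EuclideanSpace ℝ ι) : Prop where
  zero : ∀ k, Q 0 k = max 0 (-b 0 k)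
  succ : ∀ t k, Q (t + 1) k = max (-b (t + 1) k) (Q t k + b (t + 1) k)

namespace IsVirtualQueue

variable {b Q : ℕ → EuclideanSpace ℝ ι}

theorem nonneg (hQ : IsVirtualQueue b Q) (t : ℕ) (k : ι) : 0 ≤ Q t k := by
  induction t with
  | zero => rw [hQ.zero]; exact le_max_left _ _
  | succ t ih =>
    rw [hQ.succ]
    rcases le_total 0 (b (t + 1) k) with h | h
    · exact le_max_of_le_right (by linarith)
    · exact le_max_of_le_left (by linarith)

protected theorem add_nonneg (hQ : IsVirtualQueue b Q) (t : ℕ) (k : ι) : 0 ≤ Q t k + b t k := by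
  cases t with
  | zero => rw [hQ.zero]; linarith [le_max_right 0 (-b 0 k)]
  | succ t => rw [hQ.succ]; linarith [le_max_left (-b (t + 1) k) (Q t k + b (t + 1) k)]

theorem le_sub (hQ : IsVirtualQueue b Q) (t : ℕ) (k : ι) : b (t + 1) k ≤ Q (t + 1) k - Q t k := by
  rw [hQ.succ]; linarith [le_max_right (-b (t + 1) k) (Q t k + b (t + 1) k)]

theorem sum_le (hQ : IsVirtualQueue b Q) (t : ℕ) (k : ι) :
    ∑ τ ∈ Finset.range t, b (τ + 1) k ≤ Q t k :=
  calc ∑ τ ∈ Finset.range t, b (τ + 1) k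
      ≤ ∑ τ ∈ Finset.range t, (Q (τ + 1) k - Q τ k) :=
        Finset.sum_le_sum fun τ _ => hQ.le_sub τ k
    _ = Q t k - Q 0 k := Finset.sum_range_sub (fun τ => Q τ k) t
    _ ≤ Q t k := by linarith [hQ.nonneg 0 k]

theorem norm_zero_le [Fintype ι] (hQ : IsVirtualQueue b Q) : ‖Q 0‖ ≤ ‖b 0‖ := by
  rw [EuclideanSpace.norm_eq, EuclideanSpace.norm_eq]
  gcongr with k
  rw [hQ.zero, Real.norm_eq_abs, Real.norm_eq_abs, abs_of_nonneg (le_max_left _ _)]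
  exact max_le (abs_nonneg _) (neg_le_abs _)

theorem half_norm_sq_sub_le [Fintype ι] (hQ : IsVirtualQueue b Q) (t : ℕ) :
    ‖Q (t + 1)‖ ^ 2 / 2 - ‖Q t‖ ^ 2 / 2 ≤ ⟪Q t, b (t + 1)⟫ + ‖b (t + 1)‖ ^ 2 := by
  have hk : ∀ k, Q (t + 1) k ^ 2 / 2 - Q t k ^ 2 / 2 ≤ Q t k * b (t + 1) k + b (t + 1) k ^ 2 := by
    intro k
    rw [hQ.succ]
    rcases le_total (-b (t + 1) k) (Q t k + b (t + 1) k) with h | h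
    · rw [max_eq_right h]; nlinarith [sq_nonneg (b (t + 1) k)]
    · rw [max_eq_left h]; nlinarith [sq_nonneg (Q t k + b (t + 1) k)]
  rw [EuclideanSpace.real_norm_sq_eq, EuclideanSpace.real_norm_sq_eq,
    EuclideanSpace.real_norm_sq_eq, EuclideanSpace.real_inner_eq_sum, Finset.sum_div,
    Finset.sum_div, ← Finset.sum_sub_distrib, ← Finset.sum_add_distrib]
  exact Finset.sum_le_sum fun k _ => hk k

end IsVirtualQueue

end VirtualQueue

section Algorithm

variable {n m : ℕ}

noncomputable def queuePotential (γ : ℝ) (lam : EuclideanSpace ℝ (Fin m))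
    (xstar : EuclideanSpace ℝ (Fin n)) (g : Fin m → EuclideanSpace ℝ (Fin n) → ℝ)
    (z : EuclideanSpace ℝ (Fin n)) (q : EuclideanSpace ℝ (Fin m)) : ℝ :=
  γ * ‖q‖ ^ 2 - 2 * γ * ⟪lam, q⟫ + ‖xstar - z‖ ^ 2 - γ * ‖gvec g z‖ ^ 2

theorem queuePotential_succ_le {X : Set (EuclideanSpace ℝ (Fin n))}
    {f : EuclideanSpace ℝ (Fin n) → ℝ} {Gf : EuclideanSpace ℝ (Fin n) → EuclideanSpace ℝ (Fin n)}
    {g : Fin m → EuclideanSpace ℝ (Fin n) → ℝ}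
    {Gg : Fin m → EuclideanSpace ℝ (Fin n) → EuclideanSpace ℝ (Fin n)}
    {Lf β γ : ℝ} {Lg : EuclideanSpace ℝ (Fin m)} {lam : EuclideanSpace ℝ (Fin m)}
    {xstar : EuclideanSpace ℝ (Fin n)} {x : ℕ → EuclideanSpace ℝ (Fin n)}
    {Q : ℕ → EuclideanSpace ℝ (Fin m)} {t : ℕ}
    (hX : Convex ℝ X) (hf : ConvexOn ℝ X f) (hfd : ∀ z, HasGradientAt f (Gf z) z)
    (hGf : ∀ z ∈ X, ∀ w ∈ X, ‖Gf z - Gf w‖ ≤ Lf * ‖z - w‖)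
    (hg : ∀ k, ConvexOn ℝ X (g k)) (hgd : ∀ k z, HasGradientAt (g k) (Gg k z) z)
    (hGg : ∀ k, ∀ z ∈ X, ∀ w ∈ X, ‖Gg k z - Gg k w‖ ≤ Lg k * ‖z - w‖)
    (hgLip : ∀ z ∈ X, ∀ w ∈ X, ‖gvec g z - gvec g w‖ ≤ β * ‖z - w‖)
    (hxs : xstar ∈ X) (hxsFeas : ∀ k, g k xstar ≤ 0) (hlam : ∀ k, 0 ≤ lam k)
    (hdual : ∀ z ∈ X, f xstar ≤ f z + ∑ k, lam k * g k z) (hγ : 0 ≤ γ)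
    (hxX : ∀ t, x t ∈ X) (hQ : IsVirtualQueue (fun t => gvec g (x t)) Q)
    (hproj : ∀ p ∈ X,
      ‖x (t + 1) - (x t - γ • (Gf (x t) + ∑ k, (Q t k + g k (x t)) • Gg k (x t)))‖ ≤
        ‖p - (x t - γ • (Gf (x t) + ∑ k, (Q t k + g k (x t)) • Gg k (x t)))‖)
    (hstep : γ * (Lf + β ^ 2 + ∑ k, (Q t k + g k (x t)) * Lg k) ≤ 1) :
    queuePotential γ lam xstar g (x (t + 1)) (Q (t + 1)) ≤
      queuePotential γ lam xstar g (x t) (Q t) := by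
  have hlag := hX.projected_gradient_step_le_lagrangian (w := fun k => Q t k + g k (x t))
    hf hfd hGf hg hgd hGg (hQ.add_nonneg t) hγ (hxX t) (hxX (t + 1)) hxs hproj
  have hweights : ∑ k, (Q t k + g k (x t)) * g k (x (t + 1)) =
      ⟪Q t, gvec g (x (t + 1))⟫ + ⟪gvec g (x t), gvec g (x (t + 1))⟫ := by
    simp only [EuclideanSpace.real_inner_eq_sum, ← Finset.sum_add_distrib, add_mul]
    rfl
  have hfeas : ∑ k, (Q t k + g k (x t)) * g k xstar ≤ 0 :=
    Finset.sum_nonpos fun k _ => mul_nonpos_of_nonneg_of_nonpos (hQ.add_nonneg t k) (hxsFeas k)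
  have hpenalty : f xstar - f (x (t + 1)) ≤ ⟪lam, Q (t + 1) - Q t⟫ := by
    have hle : ∑ k, lam k * g k (x (t + 1)) ≤ ∑ k, lam k * (Q (t + 1) - Q t) k :=
      Finset.sum_le_sum fun k _ => mul_le_mul_of_nonneg_left (hQ.le_sub t k) (hlam k)
    rw [EuclideanSpace.real_inner_eq_sum]
    linarith [hdual _ (hxX (t + 1))]
  have hcross : ‖gvec g (x (t + 1))‖ ^ 2 + ‖gvec g (x t)‖ ^ 2 - β ^ 2 * ‖x (t + 1) - x t‖ ^ 2 ≤
      2 * ⟪gvec g (x t), gvec g (x (t + 1))⟫ := by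
    have hsq := pow_le_pow_left₀ (norm_nonneg _) (hgLip _ (hxX (t + 1)) _ (hxX t)) 2
    rw [norm_sub_sq_real, mul_pow, real_inner_comm] at hsq
    linarith
  have hdrift := hQ.half_norm_sq_sub_le t
  have hcurv := mul_le_mul_of_nonneg_right hstep (sq_nonneg ‖x (t + 1) - x t‖)
  simp only [queuePotential, inner_sub_right] at hpenalty ⊢
  rw [hweights] at hlag
  linear_combination hlag + 2 * γ * hdrift + γ * hcross + 2 * γ * hpenalty + 2 * γ * hfeas + hcurv

theorem le_two_mul_add_of_sq_sub_le {r a b : ℝ} (ha : 0 ≤ a) (hb : 0 ≤ b)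
    (h : r ^ 2 - 2 * a * r ≤ b ^ 2) : r ≤ 2 * a + b := by
  by_contra! hr
  nlinarith

theorem norm_le_of_queuePotential_le {γ R C : ℝ} {lam : EuclideanSpace ℝ (Fin m)}
    {xstar z : EuclideanSpace ℝ (Fin n)} {g : Fin m → EuclideanSpace ℝ (Fin n) → ℝ}
    {q : EuclideanSpace ℝ (Fin m)} (hγ : 0 < γ) (hR : 0 ≤ R) (hC : 0 ≤ C)
    (hgz : ‖gvec g z‖ ≤ C) (hV : queuePotential γ lam xstar g z q ≤ R ^ 2) :
    ‖q‖ ≤ 2 * ‖lam‖ + R / √γ + C := by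
  rw [add_assoc]
  refine le_two_mul_add_of_sq_sub_le (norm_nonneg lam) (by positivity) ?_
  have hinner : ⟪lam, q⟫ ≤ ‖lam‖ * ‖q‖ := real_inner_le_norm lam q
  have hgz2 : ‖gvec g z‖ ^ 2 ≤ C ^ 2 := pow_le_pow_left₀ (norm_nonneg _) hgz 2
  have hγV : γ * (‖q‖ ^ 2 - 2 * ‖lam‖ * ‖q‖) ≤ γ * (R ^ 2 / γ + C ^ 2) := by
    rw [mul_add, mul_div_cancel₀ _ hγ.ne']
    unfold queuePotential at hV
    nlinarith [sq_nonneg ‖xstar - z‖]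
  have hRγ : (R / √γ) ^ 2 = R ^ 2 / γ := by rw [div_pow, Real.sq_sqrt hγ.le]
  nlinarith [le_of_mul_le_mul_left hγV hγ, mul_nonneg (div_nonneg hR (Real.sqrt_nonneg γ)) hC]

theorem step_size_mul_le_one {γ R C Lf β : ℝ} {Lg lam q : EuclideanSpace ℝ (Fin m)}
    {g : Fin m → EuclideanSpace ℝ (Fin n) → ℝ} {z : EuclideanSpace ℝ (Fin n)} (hγ : 0 < γ)
    (hγcond : β ^ 2 + Lf + 2 * ‖lam‖ * ‖Lg‖ + 2 * C * ‖Lg‖ + ‖Lg‖ * R / √γ ≤ 1 / γ)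
    (hq : ‖q‖ ≤ 2 * ‖lam‖ + R / √γ + C) (hgz : ‖gvec g z‖ ≤ C) :
    γ * (Lf + β ^ 2 + ∑ k, (q k + g k z) * Lg k) ≤ 1 := by
  have hweights : ∑ k, (q k + g k z) * Lg k ≤ (2 * ‖lam‖ + R / √γ + 2 * C) * ‖Lg‖ :=
    calc ∑ k, (q k + g k z) * Lg k = ⟪q + gvec g z, Lg⟫ := by
          rw [EuclideanSpace.real_inner_eq_sum]; rfl
      _ ≤ ‖q + gvec g z‖ * ‖Lg‖ := real_inner_le_norm _ _
      _ ≤ (‖q‖ + ‖gvec g z‖) * ‖Lg‖ := by gcongr; exact norm_add_le _ _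
      _ ≤ (2 * ‖lam‖ + R / √γ + 2 * C) * ‖Lg‖ :=
          mul_le_mul_of_nonneg_right (by linarith) (norm_nonneg _)
  calc γ * (Lf + β ^ 2 + ∑ k, (q k + g k z) * Lg k) ≤ γ * (1 / γ) := by
        gcongr
        linarith [mul_div_assoc ‖Lg‖ R √γ]
    _ = 1 := mul_one_div_cancel hγ.ne'

theorem norm_queue_le {X : Set (EuclideanSpace ℝ (Fin n))}
    {f : EuclideanSpace ℝ (Fin n) → ℝ} {Gf : EuclideanSpace ℝ (Fin n) → EuclideanSpace ℝ (Fin n)}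
    {g : Fin m → EuclideanSpace ℝ (Fin n) → ℝ}
    {Gg : Fin m → EuclideanSpace ℝ (Fin n) → EuclideanSpace ℝ (Fin n)}
    {Lf β γ R C : ℝ} {Lg : EuclideanSpace ℝ (Fin m)} {lam : EuclideanSpace ℝ (Fin m)}
    {xstar : EuclideanSpace ℝ (Fin n)} {x : ℕ → EuclideanSpace ℝ (Fin n)}
    {Q : ℕ → EuclideanSpace ℝ (Fin m)}
    (hX : Convex ℝ X) (hf : ConvexOn ℝ X f) (hfd : ∀ z, HasGradientAt f (Gf z) z)
    (hGf : ∀ z ∈ X, ∀ w ∈ X, ‖Gf z - Gf w‖ ≤ Lf * ‖z - w‖)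
    (hg : ∀ k, ConvexOn ℝ X (g k)) (hgd : ∀ k z, HasGradientAt (g k) (Gg k z) z)
    (hGg : ∀ k, ∀ z ∈ X, ∀ w ∈ X, ‖Gg k z - Gg k w‖ ≤ Lg k * ‖z - w‖)
    (hgLip : ∀ z ∈ X, ∀ w ∈ X, ‖gvec g z - gvec g w‖ ≤ β * ‖z - w‖)
    (hxs : xstar ∈ X) (hxsFeas : ∀ k, g k xstar ≤ 0) (hlam : ∀ k, 0 ≤ lam k)
    (hdual : ∀ z ∈ X, f xstar ≤ f z + ∑ k, lam k * g k z) (hγ : 0 < γ)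
    (hγcond : β ^ 2 + Lf + 2 * ‖lam‖ * ‖Lg‖ + 2 * C * ‖Lg‖ + ‖Lg‖ * R / √γ ≤ 1 / γ)
    (hxX : ∀ t, x t ∈ X) (hR : ‖xstar - x 0‖ ≤ R) (hgC : ∀ t, ‖gvec g (x t)‖ ≤ C)
    (hQ : IsVirtualQueue (fun t => gvec g (x t)) Q)
    (hproj : ∀ t, ∀ p ∈ X,
      ‖x (t + 1) - (x t - γ • (Gf (x t) + ∑ k, (Q t k + g k (x t)) • Gg k (x t)))‖ ≤
        ‖p - (x t - γ • (Gf (x t) + ∑ k, (Q t k + g k (x t)) • Gg k (x t)))‖)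
    (t : ℕ) : ‖Q t‖ ≤ 2 * ‖lam‖ + R / √γ + C := by
  have hR0 : 0 ≤ R := (norm_nonneg _).trans hR
  have hC0 : 0 ≤ C := (norm_nonneg _).trans (hgC 0)
  have hV0 : queuePotential γ lam xstar g (x 0) (Q 0) ≤ R ^ 2 := by
    have hQ0 : ‖Q 0‖ ^ 2 ≤ ‖gvec g (x 0)‖ ^ 2 := pow_le_pow_left₀ (norm_nonneg _) hQ.norm_zero_le 2
    have hlamQ : 0 ≤ ⟪lam, Q 0⟫ := by
      rw [EuclideanSpace.real_inner_eq_sum]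
      exact Finset.sum_nonneg fun k _ => mul_nonneg (hlam k) (hQ.nonneg 0 k)
    have hR2 : ‖xstar - x 0‖ ^ 2 ≤ R ^ 2 := pow_le_pow_left₀ (norm_nonneg _) hR 2
    unfold queuePotential
    nlinarith
  have hV : ∀ t, queuePotential γ lam xstar g (x t) (Q t) ≤ R ^ 2 := by
    intro t
    induction t with
    | zero => exact hV0
    | succ t ih =>
      refine le_trans (queuePotential_succ_le hX hf hfd hGf hg hgd hGg hgLip hxs hxsFeas hlam
        hdual hγ.le hxX hQ (hproj t) ?_) ih
      exact step_size_mul_le_one hγ hγcond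
        (norm_le_of_queuePotential_le hγ hR0 hC0 (hgC t) ih) (hgC t)
  exact norm_le_of_queuePotential_le hγ hR0 hC0 (hgC t) (hV t)

end Algorithm

/-- Indexing convention: `x 0` denotes the initial point `x(−1)` and `x (t+1)`
denotes the iterate `x(t)`; thus at iteration `t` of the paper,
`x(t) = x (t+1)`, `x(t−1) = x t`, and `Q(t) = Q t`. -/
theorem constraint_violation_bound_general {n m : ℕ}
    (X : Set (EuclideanSpace ℝ (Fin n)))
    (hXcv : Convex ℝ X)
    (R : ℝ) (hR : ∀ z ∈ X, ∀ w ∈ X, ‖z - w‖ ≤ R)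
    (f : EuclideanSpace ℝ (Fin n) → ℝ)
    (Gf : EuclideanSpace ℝ (Fin n) → EuclideanSpace ℝ (Fin n))
    (g : Fin m → EuclideanSpace ℝ (Fin n) → ℝ)
    (Gg : Fin m → EuclideanSpace ℝ (Fin n) → EuclideanSpace ℝ (Fin n))
    (Lf : ℝ) (Lg : EuclideanSpace ℝ (Fin m)) (β C : ℝ)
    (hf : ConvexOn ℝ X f)
    (hfd : ∀ z, HasGradientAt f (Gf z) z)
    (hGfLip : ∀ z ∈ X, ∀ w ∈ X, ‖Gf z - Gf w‖ ≤ Lf * ‖z - w‖)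
    (hg : ∀ k, ConvexOn ℝ X (g k))
    (hgd : ∀ (k : Fin m) z, HasGradientAt (g k) (Gg k z) z)
    (hGgLip : ∀ (k : Fin m), ∀ z ∈ X, ∀ w ∈ X, ‖Gg k z - Gg k w‖ ≤ Lg k * ‖z - w‖)
    (hgLip : ∀ z ∈ X, ∀ w ∈ X, ‖gvec g z - gvec g w‖ ≤ β * ‖z - w‖)
    (hgC : ∀ z ∈ X, ‖gvec g z‖ ≤ C)
    (xstar : EuclideanSpace ℝ (Fin n)) (hxs : xstar ∈ X)
    (hxsFeas : ∀ k, g k xstar ≤ 0)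
    (lam : EuclideanSpace ℝ (Fin m)) (hlam : ∀ k, 0 ≤ lam k)
    (hduality : IsGLB ((fun z => f z + ∑ k, lam k * g k z) '' X) (f xstar))
    (D : ℝ) (hD : D = β ^ 2 + Lf + 2 * ‖lam‖ * ‖Lg‖ + 2 * C * ‖Lg‖)
    (γ : ℝ) (hγ : 0 < γ)
    (hγcond : D + ‖Lg‖ * R / Real.sqrt γ - 1 / γ ≤ 0)
    (x : ℕ → EuclideanSpace ℝ (Fin n)) (hxX : ∀ t, x t ∈ X)
    (Q : ℕ → EuclideanSpace ℝ (Fin m))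
    (hQ0 : ∀ k, Q 0 k = max 0 (-(g k (x 0))))
    (hQr : ∀ (t : ℕ) (k : Fin m),
      Q (t + 1) k = max (-(g k (x (t + 1)))) (Q t k + g k (x (t + 1))))
    (d : ℕ → EuclideanSpace ℝ (Fin n))
    (hd : ∀ t, d t = Gf (x t) + ∑ k, (Q t k + g k (x t)) • Gg k (x t))
    (hproj : ∀ t, ∀ y ∈ X,
      ‖x (t + 1) - (x t - γ • d t)‖ ≤ ‖y - (x t - γ • d t)‖) :
    ∀ t : ℕ, 1 ≤ t → ∀ k : Fin m,
      g k ((t : ℝ)⁻¹ • ∑ τ ∈ Finset.range t, x (τ + 1)) ≤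
        (1 / (t : ℝ)) * (2 * ‖lam‖ + R / Real.sqrt γ + C) := by
  intro t ht k
  have hQ : IsVirtualQueue (fun t => gvec g (x t)) Q := ⟨hQ0, hQr⟩
  have hQt := norm_queue_le hXcv hf hfd hGfLip hg hgd hGgLip hgLip hxs hxsFeas hlam
    (fun z hz => hduality.1 ⟨z, hz, rfl⟩) hγ (by rw [hD] at hγcond; linarith)
    hxX (hR _ hxs _ (hxX 0)) (fun t => hgC _ (hxX t)) hQ (fun t => hd t ▸ hproj t) t
  calc g k ((t : ℝ)⁻¹ • ∑ τ ∈ Finset.range t, x (τ + 1))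
      ≤ (t : ℝ)⁻¹ * ∑ τ ∈ Finset.range t, g k (x (τ + 1)) :=
        (hg k).map_range_average_le ht fun τ _ => hxX (τ + 1)
    _ ≤ (t : ℝ)⁻¹ * ‖Q t‖ := by
        gcongr
        exact (hQ.sum_le t k).trans ((Real.le_norm_self _).trans (PiLp.norm_apply_le _ _))
    _ ≤ 1 / (t : ℝ) * (2 * ‖lam‖ + R / Real.sqrt γ + C) := by
        rw [one_div]
        gcongr

/-- Constraint violations: the running average `x̄(t) = (1/t) Σ_{τ=0}^{t−1} x(τ)` satisfies `g_k(x̄(t)) ≤ (1/t)(2‖λ*‖ + R/√γ + C)`.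
Indexing convention: `x 0` denotes the initial point `x(−1)` and `x (t+1)`
denotes the iterate `x(t)`; thus at iteration `t` of the paper,
`x(t) = x (t+1)`, `x(t−1) = x t`, and `Q(t) = Q t`. -/
theorem constraint_violation_bound {n m : ℕ}
    (X : Set (EuclideanSpace ℝ (Fin n)))
    (hXne : X.Nonempty) (hXcv : Convex ℝ X) (hXcp : IsCompact X)
    (R : ℝ) (hR : ∀ z ∈ X, ∀ w ∈ X, ‖z - w‖ ≤ R)
    (f : EuclideanSpace ℝ (Fin n) → ℝ)
    (Gf : EuclideanSpace ℝ (Fin n) → EuclideanSpace ℝ (Fin n))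
    (g : Fin m → EuclideanSpace ℝ (Fin n) → ℝ)
    (Gg : Fin m → EuclideanSpace ℝ (Fin n) → EuclideanSpace ℝ (Fin n))
    (Lf : ℝ) (Lg : EuclideanSpace ℝ (Fin m)) (β C : ℝ)
    (hf : ConvexOn ℝ X f)
    (hfd : ∀ z, HasGradientAt f (Gf z) z)
    (hLf : 0 ≤ Lf)
    (hGfLip : ∀ z ∈ X, ∀ w ∈ X, ‖Gf z - Gf w‖ ≤ Lf * ‖z - w‖)
    (hg : ∀ k, ConvexOn ℝ X (g k))
    (hgd : ∀ (k : Fin m) z, HasGradientAt (g k) (Gg k z) z)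
    (hLg : ∀ k, 0 ≤ Lg k)
    (hGgLip : ∀ (k : Fin m), ∀ z ∈ X, ∀ w ∈ X, ‖Gg k z - Gg k w‖ ≤ Lg k * ‖z - w‖)
    (hgLip : ∀ z ∈ X, ∀ w ∈ X, ‖gvec g z - gvec g w‖ ≤ β * ‖z - w‖)
    (hgC : ∀ z ∈ X, ‖gvec g z‖ ≤ C)
    (xstar : EuclideanSpace ℝ (Fin n)) (hxs : xstar ∈ X)
    (hxsFeas : ∀ k, g k xstar ≤ 0)
    (hxsOpt : ∀ z ∈ X, (∀ k, g k z ≤ 0) → f xstar ≤ f z)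
    (lam : EuclideanSpace ℝ (Fin m)) (hlam : ∀ k, 0 ≤ lam k)
    (hduality : IsGLB ((fun z => f z + ∑ k, lam k * g k z) '' X) (f xstar))
    (D : ℝ) (hD : D = β ^ 2 + Lf + 2 * ‖lam‖ * ‖Lg‖ + 2 * C * ‖Lg‖)
    (γ : ℝ) (hγ : 0 < γ)
    (hγcond : D + ‖Lg‖ * R / Real.sqrt γ - 1 / γ ≤ 0)
    (x : ℕ → EuclideanSpace ℝ (Fin n)) (hxX : ∀ t, x t ∈ X)
    (Q : ℕ → EuclideanSpace ℝ (Fin m))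
    (hQ0 : ∀ k, Q 0 k = max 0 (-(g k (x 0))))
    (hQr : ∀ (t : ℕ) (k : Fin m),
      Q (t + 1) k = max (-(g k (x (t + 1)))) (Q t k + g k (x (t + 1))))
    (d : ℕ → EuclideanSpace ℝ (Fin n))
    (hd : ∀ t, d t = Gf (x t) + ∑ k, (Q t k + g k (x t)) • Gg k (x t))
    (hproj : ∀ t, ∀ y ∈ X,
      ‖x (t + 1) - (x t - γ • d t)‖ ≤ ‖y - (x t - γ • d t)‖) :
    ∀ t : ℕ, 1 ≤ t → ∀ k : Fin m,
      g k ((t : ℝ)⁻¹ • ∑ τ ∈ Finset.range t, x (τ + 1)) ≤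
        (1 / (t : ℝ)) * (2 * ‖lam‖ + R / Real.sqrt γ + C) :=
  constraint_violation_bound_general X hXcv R hR f Gf g Gg Lf Lg β C hf hfd hGfLip hg hgd hGgLip
    hgLip hgC xstar hxs hxsFeas lam hlam hduality D hD γ hγ hγcond x hxX Q hQ0 hQr d hd hproj
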